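/- For any Hermitian matrices P and Q of the same dimension, |Tr ζ(P+Q) − Tr ζ(P)| ≤ 2(‖P‖₂‖Q‖₂ + ‖Q‖₂²), where ζ(x) = x² for x ≤ 0 and ζ(x) = 0 otherwise is applied via functional calculus and ‖·‖₂ is the Frobenius norm. -/

import Mathlib

open Matrix

/-- `ζ(x) = x²` for `x ≤ 0` and `0` otherwise. -/
noncomputable def zetaFn (x : ℝ) : ℝ := if x ≤ 0 then x ^ 2 else 0

/-- `Tr ζ(H)` for a Hermitian matrix `H`, via functional calculus (applied to eigenvalues). -/
noncomputable def traceZeta {m : ℕ} {H : Matrix (Fin m) (Fin m) ℂ}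
    (hH : H.IsHermitian) : ℝ :=
  ∑ i, zetaFn (hH.eigenvalues i)

/-- Frobenius (Schatten 2) norm `‖A‖₂ = (Tr(A†A))^(1/2)`. -/
noncomputable def frobNorm {m : ℕ} (A : Matrix (Fin m) (Fin m) ℂ) : ℝ :=
  Real.sqrt (Matrix.trace (Aᴴ * A)).re

/-! Write `A = U diag(α) U†`, `B = V diag(β) V†` and `D i j = |(U†V) i j|²`. Then `D` is doubly
stochastic, `‖A - B‖₂² = ∑ D i j (α i - β j)²` (conjugate `A - B` by the unitaries), and
`Tr ζ(A) - Tr ζ(B) = ∑ D i j (ζ(α i) - ζ(β j))`. As `ζ(x) = min(x, 0)²` and `x ↦ min(x, 0)` is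
1-Lipschitz, `(ζ a - ζ b)² ≤ (a - b)² · 2(a² + b²)`, so Cauchy–Schwarz with weights `D` gives
`(Tr ζ(A) - Tr ζ(B))² ≤ ‖A - B‖₂² · 2(‖A‖₂² + ‖B‖₂²)`. Take `A = P + Q`, `B = P` and bound
`‖P + Q‖₂ ≤ ‖P‖₂ + ‖Q‖₂`. -/

lemma zetaFn_eq_sq_min (x : ℝ) : zetaFn x = min x 0 ^ 2 := by
  unfold zetaFn
  split_ifs with h
  · rw [min_eq_left h]
  · rw [min_eq_right (not_le.mp h).le]; ring

lemma sq_zetaFn_sub_le (a b : ℝ) :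
    (zetaFn a - zetaFn b) ^ 2 ≤ (a - b) ^ 2 * (2 * (a ^ 2 + b ^ 2)) := by
  rw [zetaFn_eq_sq_min, zetaFn_eq_sq_min]
  have h_sub : (min a 0 - min b 0) ^ 2 ≤ (a - b) ^ 2 := by
    rcases le_total a 0 with ha | ha <;> rcases le_total b 0 with hb | hb <;>
      simp only [min_eq_left, min_eq_right, ha, hb] <;> nlinarith
  have h_add : (min a 0 + min b 0) ^ 2 ≤ 2 * (a ^ 2 + b ^ 2) := by
    rcases le_total a 0 with ha | ha <;> rcases le_total b 0 with hb | hb <;>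
      simp only [min_eq_left, min_eq_right, ha, hb] <;> nlinarith [sq_nonneg (a - b)]
  calc (min a 0 ^ 2 - min b 0 ^ 2) ^ 2
      = (min a 0 - min b 0) ^ 2 * (min a 0 + min b 0) ^ 2 := by ring
    _ ≤ (a - b) ^ 2 * (2 * (a ^ 2 + b ^ 2)) :=
      mul_le_mul h_sub h_add (sq_nonneg _) (sq_nonneg _)

section DoublyStochastic
variable {n : Type*} [Fintype n] [DecidableEq n] {d : Matrix n n ℝ}

lemma Matrix.sum_sum_mul_add_of_mem_doublyStochastic (hd : d ∈ doublyStochastic ℝ n)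
    (f g : n → ℝ) :
    ∑ i, ∑ j, d i j * (f i + g j) = ∑ i, f i + ∑ j, g j := by
  simp only [mul_add, Finset.sum_add_distrib]
  rw [Finset.sum_comm (f := fun i j => d i j * g j)]
  simp only [← Finset.sum_mul, sum_row_of_mem_doublyStochastic hd,
    sum_col_of_mem_doublyStochastic hd, one_mul]

lemma sq_sum_zetaFn_sub_sum_zetaFn_le (hd : d ∈ doublyStochastic ℝ n) (α β : n → ℝ) :
    (∑ i, zetaFn (α i) - ∑ j, zetaFn (β j)) ^ 2 ≤
      (∑ i, ∑ j, d i j * (α i - β j) ^ 2) * (2 * (∑ i, α i ^ 2 + ∑ j, β j ^ 2)) := by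
  have hsum (f g : n → ℝ) : ∑ i, f i + ∑ j, g j = ∑ p : n × n, d p.1 p.2 * (f p.1 + g p.2) := by
    rw [← sum_sum_mul_add_of_mem_doublyStochastic hd, Fintype.sum_prod_type]
  rw [sub_eq_add_neg, ← Finset.sum_neg_distrib, hsum, hsum (α · ^ 2), Finset.mul_sum,
    ← Fintype.sum_prod_type' (f := fun i j => d i j * (α i - β j) ^ 2)]
  refine Finset.sum_sq_le_sum_mul_sum_of_sq_le_mul _ (fun p _ => ?_) (fun p _ => ?_)
    (fun p _ => ?_) <;> have h0 : 0 ≤ d p.1 p.2 := nonneg_of_mem_doublyStochastic hd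
  · positivity
  · positivity
  · have hζ := sq_zetaFn_sub_le (α p.1) (β p.2)
    calc (d p.1 p.2 * (zetaFn (α p.1) + -zetaFn (β p.2))) ^ 2
        = d p.1 p.2 * d p.1 p.2 * (zetaFn (α p.1) - zetaFn (β p.2)) ^ 2 := by ring
      _ ≤ d p.1 p.2 * d p.1 p.2 * ((α p.1 - β p.2) ^ 2 * (2 * (α p.1 ^ 2 + β p.2 ^ 2))) := by
        gcongr
      _ = _ := by ring

end DoublyStochastic

namespace Matrix
variable {m n 𝕜 : Type*} [Fintype m] [Fintype n] [RCLike 𝕜]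

lemma re_trace_conjTranspose_mul_self (X : Matrix m n 𝕜) :
    RCLike.re (trace (Xᴴ * X)) = ∑ i, ∑ j, ‖X i j‖ ^ 2 := by
  simp only [trace, diag, mul_apply, conjTranspose_apply, map_sum]
  rw [Finset.sum_comm]
  refine Finset.sum_congr rfl fun i _ => Finset.sum_congr rfl fun j _ => ?_
  rw [RCLike.star_def, mul_comm, RCLike.mul_conj, ← RCLike.ofReal_pow, RCLike.ofReal_re]

variable [DecidableEq n]

lemma normSq_apply_mem_doublyStochastic {U : Matrix n n 𝕜} (hU : U ∈ unitaryGroup n 𝕜) :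
    (of fun i j => ‖U i j‖ ^ 2 : Matrix n n ℝ) ∈ doublyStochastic ℝ n := by
  have hrow (i : n) : ∑ j, ‖U i j‖ ^ 2 = RCLike.re ((U * star U) i i) := by
    simp only [mul_apply, star_apply, RCLike.star_def, RCLike.mul_conj, map_sum,
      ← RCLike.ofReal_pow, RCLike.ofReal_re]
  have hcol (j : n) : ∑ i, ‖U i j‖ ^ 2 = RCLike.re ((star U * U) j j) := by
    simp only [mul_apply, star_apply, RCLike.star_def, mul_comm (starRingEnd 𝕜 _),
      RCLike.mul_conj, map_sum, ← RCLike.ofReal_pow, RCLike.ofReal_re]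
  refine mem_doublyStochastic_iff_sum.2 ⟨fun i j => sq_nonneg _, fun i => ?_, fun j => ?_⟩
  · simp [hrow, mem_unitaryGroup_iff.1 hU]
  · simp [hcol, mem_unitaryGroup_iff'.1 hU]

lemma trace_conjTranspose_mul_self_unitary_conj {U V : Matrix n n 𝕜}
    (hU : U ∈ unitaryGroup n 𝕜) (hV : V ∈ unitaryGroup n 𝕜) (X : Matrix n n 𝕜) :
    trace ((U * X * V)ᴴ * (U * X * V)) = trace (Xᴴ * X) := by
  have hU' : Uᴴ * U = 1 := mem_unitaryGroup_iff'.1 hU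
  have hV' : V * Vᴴ = 1 := mem_unitaryGroup_iff.1 hV
  calc trace ((U * X * V)ᴴ * (U * X * V)) = trace (Vᴴ * (Xᴴ * (Uᴴ * U) * X) * V) := by
        simp only [conjTranspose_mul, Matrix.mul_assoc]
    _ = trace (V * Vᴴ * (Xᴴ * X)) := by
        rw [hU', Matrix.mul_one, trace_mul_comm, Matrix.mul_assoc]
    _ = trace (Xᴴ * X) := by rw [hV', Matrix.one_mul]

namespace IsHermitian
variable {A B : Matrix n n 𝕜}

lemma star_eigenvectorUnitary_mul_mul_eigenvectorUnitary (hA : A.IsHermitian) :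
    star (hA.eigenvectorUnitary : Matrix n n 𝕜) * A * (hA.eigenvectorUnitary : Matrix n n 𝕜) =
      diagonal (RCLike.ofReal ∘ hA.eigenvalues) := by
  simpa using hA.conjStarAlgAut_star_eigenvectorUnitary

noncomputable def eigenOverlap (hA : A.IsHermitian) (hB : B.IsHermitian) : Matrix n n ℝ :=
  of fun i j =>
    ‖(star (hA.eigenvectorUnitary : Matrix n n 𝕜) * (hB.eigenvectorUnitary : Matrix n n 𝕜)) i j‖ ^ 2

lemma eigenOverlap_mem_doublyStochastic (hA : A.IsHermitian) (hB : B.IsHermitian) :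
    eigenOverlap hA hB ∈ doublyStochastic ℝ n :=
  normSq_apply_mem_doublyStochastic <|
    mul_mem (Unitary.star_mem hA.eigenvectorUnitary.2) hB.eigenvectorUnitary.2

lemma star_eigenvectorUnitary_mul_sub_mul_eigenvectorUnitary (hA : A.IsHermitian)
    (hB : B.IsHermitian) :
    star (hA.eigenvectorUnitary : Matrix n n 𝕜) * (A - B) *
        (hB.eigenvectorUnitary : Matrix n n 𝕜) =
      of fun i j => ((hA.eigenvalues i - hB.eigenvalues j : ℝ) : 𝕜) *
        (star (hA.eigenvectorUnitary : Matrix n n 𝕜) *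
          (hB.eigenvectorUnitary : Matrix n n 𝕜)) i j := by
  have hDA := star_eigenvectorUnitary_mul_mul_eigenvectorUnitary hA
  have hDB := star_eigenvectorUnitary_mul_mul_eigenvectorUnitary hB
  set U : Matrix n n 𝕜 := ↑hA.eigenvectorUnitary
  set V : Matrix n n 𝕜 := ↑hB.eigenvectorUnitary
  have hU : U * star U = 1 := Unitary.coe_mul_star_self _
  have hV : V * star V = 1 := Unitary.coe_mul_star_self _
  have hAV : star U * A * V = diagonal (RCLike.ofReal ∘ hA.eigenvalues) * (star U * V) := by
    calc star U * A * V = star U * A * (U * star U) * V := by rw [hU, Matrix.mul_one]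
      _ = star U * A * U * (star U * V) := by simp only [Matrix.mul_assoc]
      _ = _ := by rw [hDA]
  have hBV : star U * B * V = star U * V * diagonal (RCLike.ofReal ∘ hB.eigenvalues) := by
    calc star U * B * V = star U * (V * star V) * B * V := by rw [hV, Matrix.mul_one]
      _ = star U * V * (star V * B * V) := by simp only [Matrix.mul_assoc]
      _ = _ := by rw [hDB]
  ext i j
  rw [Matrix.mul_sub, Matrix.sub_mul, hAV, hBV]
  simp only [sub_apply, diagonal_mul, mul_diagonal, of_apply, Function.comp_apply,
    RCLike.ofReal_sub]
  ring

lemma re_trace_conjTranspose_sub_mul_sub (hA : A.IsHermitian) (hB : B.IsHermitian) :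
    RCLike.re (trace ((A - B)ᴴ * (A - B))) =
      ∑ i, ∑ j, eigenOverlap hA hB i j * (hA.eigenvalues i - hB.eigenvalues j) ^ 2 := by
  rw [← trace_conjTranspose_mul_self_unitary_conj (Unitary.star_mem hA.eigenvectorUnitary.2)
    hB.eigenvectorUnitary.2, star_eigenvectorUnitary_mul_sub_mul_eigenvectorUnitary hA hB,
    re_trace_conjTranspose_mul_self]
  simp only [of_apply, norm_mul, RCLike.norm_ofReal, mul_pow, sq_abs, eigenOverlap, mul_comm]

lemma re_trace_conjTranspose_mul_self_eq_sum_eigenvalues_sq (hA : A.IsHermitian) :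
    RCLike.re (trace (Aᴴ * A)) = ∑ i, hA.eigenvalues i ^ 2 := by
  have h0 : (isHermitian_zero : (0 : Matrix n n 𝕜).IsHermitian).eigenvalues = 0 :=
    (eigenvalues_eq_zero_iff _).2 rfl
  have h := re_trace_conjTranspose_sub_mul_sub hA isHermitian_zero
  rw [sub_zero, h0] at h
  rw [h]
  simpa using sum_sum_mul_add_of_mem_doublyStochastic
    (eigenOverlap_mem_doublyStochastic hA isHermitian_zero) (hA.eigenvalues · ^ 2) 0

end IsHermitian
end Matrix

section FrobNorm
variable {m : ℕ}

lemma frobNorm_nonneg (X : Matrix (Fin m) (Fin m) ℂ) : 0 ≤ frobNorm X := Real.sqrt_nonneg _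

lemma frobNorm_sq (X : Matrix (Fin m) (Fin m) ℂ) : frobNorm X ^ 2 = (trace (Xᴴ * X)).re := by
  refine Real.sq_sqrt ?_
  rw [← RCLike.re_to_complex, re_trace_conjTranspose_mul_self]
  positivity

section Frobenius
attribute [local instance] Matrix.frobeniusNormedAddCommGroup

lemma frobNorm_eq_frobenius_norm (X : Matrix (Fin m) (Fin m) ℂ) : frobNorm X = ‖X‖ := by
  rw [frobenius_norm_def, frobNorm, Real.sqrt_eq_rpow, ← RCLike.re_to_complex,
    re_trace_conjTranspose_mul_self]
  norm_cast

lemma frobNorm_add_le (X Y : Matrix (Fin m) (Fin m) ℂ) :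
    frobNorm (X + Y) ≤ frobNorm X + frobNorm Y := by
  simpa only [frobNorm_eq_frobenius_norm] using norm_add_le X Y

end Frobenius

lemma sq_traceZeta_sub_le {A B : Matrix (Fin m) (Fin m) ℂ} (hA : A.IsHermitian)
    (hB : B.IsHermitian) :
    (traceZeta hA - traceZeta hB) ^ 2 ≤
      frobNorm (A - B) ^ 2 * (2 * (frobNorm A ^ 2 + frobNorm B ^ 2)) := by
  simp only [frobNorm_sq, ← RCLike.re_to_complex, hA.re_trace_conjTranspose_sub_mul_sub hB,
    hA.re_trace_conjTranspose_mul_self_eq_sum_eigenvalues_sq,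
    hB.re_trace_conjTranspose_mul_self_eq_sum_eigenvalues_sq]
  exact sq_sum_zetaFn_sub_sum_zetaFn_le (hA.eigenOverlap_mem_doublyStochastic hB) _ _

end FrobNorm

/-- For Hermitian matrices `P`, `Q` of the same dimension,
`|Tr ζ(P+Q) − Tr ζ(P)| ≤ 2(‖P‖₂‖Q‖₂ + ‖Q‖₂²)`. -/
theorem abs_traceZeta_add_sub_traceZeta_le {m : ℕ} {P Q : Matrix (Fin m) (Fin m) ℂ}
    (hP : P.IsHermitian) (hQ : Q.IsHermitian) :
    |traceZeta (hP.add hQ) - traceZeta hP| ≤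
      2 * (frobNorm P * frobNorm Q + frobNorm Q ^ 2) := by
  have hp := frobNorm_nonneg P
  have hq := frobNorm_nonneg Q
  have hpq0 := frobNorm_nonneg (P + Q)
  have hpq := frobNorm_add_le P Q
  have key := sq_traceZeta_sub_le (hP.add hQ) hP
  rw [add_sub_cancel_left] at key
  refine abs_le_of_sq_le_sq (key.trans ?_) (by positivity)
  calc frobNorm Q ^ 2 * (2 * (frobNorm (P + Q) ^ 2 + frobNorm P ^ 2))
      ≤ frobNorm Q ^ 2 *
          (2 * ((frobNorm P + frobNorm Q) ^ 2 + (frobNorm P + frobNorm Q) ^ 2)) := by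
        gcongr; linarith
    _ = (2 * (frobNorm P * frobNorm Q + frobNorm Q ^ 2)) ^ 2 := by ring
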